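/- arXiv:1309.3113 — 3 statements merged into one kernel-verified Lean document; each statement's English description precedes it below -/
import Mathlib

section
/- If e : L → C is a canonical extension of a bounded lattice L, then every element u ∈ C satisfies u = ⨆{x ∈ J∞(C) : x ≤ u} and u = ⨅{y ∈ M∞(C) : u ≤ y}; that is, the completely join-irreducible elements join-generate C and the completely meet-irreducible elements meet-generate C. -/
/-- An element `x` of a complete lattice is completely join-irreducible if
`x ∈ S` whenever `x = ⨆ S`. -/
def CompletelyJoinIrreducible {C : Type*} [CompleteLattice C] (x : C) : Prop :=
  ∀ S : Set C, x = sSup S → x ∈ S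

/-- An element `y` of a complete lattice is completely meet-irreducible if
`y ∈ S` whenever `y = ⨅ S`. -/
def CompletelyMeetIrreducible {C : Type*} [CompleteLattice C] (y : C) : Prop :=
  ∀ S : Set C, y = sInf S → y ∈ S

/-- `e : L → C` is a canonical extension of the bounded lattice `L`: an injective
bounded-lattice homomorphism into a complete lattice `C` which is dense and compact. -/
def IsCanonicalExtension {L C : Type*} [Lattice L] [BoundedOrder L] [CompleteLattice C]
    (e : L → C) : Prop :=
  Function.Injective e ∧
  (∀ a b : L, e (a ⊓ b) = e a ⊓ e b) ∧
  (∀ a b : L, e (a ⊔ b) = e a ⊔ e b) ∧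
  e ⊥ = ⊥ ∧ e ⊤ = ⊤ ∧
  -- denseness
  (∀ u : C,
    u = sSup {v : C | ∃ S : Set L, v = sInf (e '' S) ∧ v ≤ u} ∧
    u = sInf {v : C | ∃ T : Set L, v = sSup (e '' T) ∧ u ≤ v}) ∧
  -- compactness
  (∀ S T : Set L, sInf (e '' S) ≤ sSup (e '' T) →
    ∃ S' T' : Finset L, ↑S' ⊆ S ∧ ↑T' ⊆ T ∧ S'.inf id ≤ T'.sup id)

/-
Density reduces everything to separating a closed element `⨅ e[F]` from an open element
`⨆ e[T]` with `⨅ e[F] ≰ ⨆ e[T]`. By compactness, the sets `G ⊇ F` with `⨅ e[G] ≰ ⨆ e[T]` are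
closed under unions of chains, so Zorn's lemma gives a maximal such `G`. Maximality makes
`j = ⨅ e[G]` the only closed element below `j` and not below `⨆ e[T]`, and since every element is
a join of closed elements, `j` is completely join-irreducible. Meet generation is the order dual.
-/

lemma eq_sSup_of_forall_not_le {C : Type*} [CompleteLattice C] {P : C → Prop}
    (hP : ∀ u v : C, ¬ u ≤ v → ∃ j, P j ∧ j ≤ u ∧ ¬ j ≤ v) (u : C) :
    u = sSup {x | P x ∧ x ≤ u} := by
  refine le_antisymm ?_ (sSup_le fun x hx => hx.2)
  by_contra hu
  obtain ⟨j, hj, hju, hjs⟩ := hP _ _ hu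
  exact hjs (le_sSup ⟨hj, hju⟩)

namespace IsCanonicalExtension

variable {L C : Type*} [Lattice L] [BoundedOrder L] [CompleteLattice C] {e : L → C}

def toBoundedLatticeHom (h : IsCanonicalExtension e) : BoundedLatticeHom L C where
  toFun := e
  map_inf' := h.2.1
  map_sup' := h.2.2.1
  map_bot' := h.2.2.2.1
  map_top' := h.2.2.2.2.1

lemma dual (h : IsCanonicalExtension e) : IsCanonicalExtension (L := Lᵒᵈ) (C := Cᵒᵈ) e := by
  obtain ⟨hinj, hinf, hsup, hbot, htop, hdense, hcompact⟩ := h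
  refine ⟨hinj, hsup, hinf, htop, hbot, fun u => (hdense u).symm, fun S T hST => ?_⟩
  obtain ⟨S', T', hS', hT', hle⟩ := hcompact T S hST
  exact ⟨T', S', hT', hS', hle⟩

lemma exists_sInf_image_le_not_le (h : IsCanonicalExtension e) {u v : C} (huv : ¬ u ≤ v) :
    ∃ S : Set L, sInf (e '' S) ≤ u ∧ ¬ sInf (e '' S) ≤ v := by
  rw [(h.2.2.2.2.2.1 u).1] at huv
  simp only [sSup_le_iff, not_forall, exists_prop] at huv
  obtain ⟨_, ⟨S, rfl, hSu⟩, hSv⟩ := huv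
  exact ⟨S, hSu, hSv⟩

lemma exists_le_sSup_image_not_le (h : IsCanonicalExtension e) {u v : C} (huv : ¬ u ≤ v) :
    ∃ T : Set L, v ≤ sSup (e '' T) ∧ ¬ u ≤ sSup (e '' T) :=
  h.dual.exists_sInf_image_le_not_le (C := Cᵒᵈ) huv

lemma exists_finset_sInf_image_le (h : IsCanonicalExtension e) {S T : Set L}
    (hST : sInf (e '' S) ≤ sSup (e '' T)) :
    ∃ S' : Finset L, ↑S' ⊆ S ∧ sInf (e '' S') ≤ sSup (e '' T) := by
  obtain ⟨S', T', hS', hT', hle⟩ := h.2.2.2.2.2.2 S T hST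
  refine ⟨S', hS', ?_⟩
  calc sInf (e '' S') = h.toBoundedLatticeHom (S'.inf id) := by
        rw [map_finset_inf, Finset.inf_eq_sInf_image]; rfl
    _ ≤ h.toBoundedLatticeHom (T'.sup id) := OrderHomClass.mono _ hle
    _ = sSup (e '' T') := by rw [map_finset_sup, Finset.sup_eq_sSup_image]; rfl
    _ ≤ sSup (e '' T) := sSup_le_sSup (Set.image_mono hT')

lemma not_sInf_image_sUnion_le (h : IsCanonicalExtension e) {c : Set (Set L)} {T : Set L}
    (hne : c.Nonempty) (hdir : DirectedOn (· ⊆ ·) c)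
    (hc : ∀ G ∈ c, ¬ sInf (e '' G) ≤ sSup (e '' T)) : ¬ sInf (e '' ⋃₀ c) ≤ sSup (e '' T) := by
  intro hle
  obtain ⟨S', hS', hS'le⟩ := h.exists_finset_sInf_image_le hle
  rw [Set.sUnion_eq_biUnion] at hS'
  obtain ⟨G, hGc, hS'G⟩ := hdir.exists_mem_subset_of_finset_subset_biUnion hne hS'
  exact hc G hGc ((sInf_le_sInf (Set.image_mono hS'G)).trans hS'le)

lemma completelyJoinIrreducible_of_forall_sInf_image_le (h : IsCanonicalExtension e)
    {j y : C} (hjy : ¬ j ≤ y)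
    (hmin : ∀ S : Set L, sInf (e '' S) ≤ j → ¬ sInf (e '' S) ≤ y → j ≤ sInf (e '' S)) :
    CompletelyJoinIrreducible j := by
  intro A hA
  have : ¬ sSup A ≤ y := hA ▸ hjy
  simp only [sSup_le_iff, not_forall, exists_prop] at this
  obtain ⟨a, haA, hay⟩ := this
  have haj : a ≤ j := hA ▸ le_sSup haA
  obtain ⟨S, hSa, hSy⟩ := h.exists_sInf_image_le_not_le hay
  rwa [le_antisymm haj ((hmin S (hSa.trans haj) hSy).trans hSa)] at haA

lemma exists_completelyJoinIrreducible_le_sInf_image (h : IsCanonicalExtension e)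
    {F T : Set L} (hFT : ¬ sInf (e '' F) ≤ sSup (e '' T)) :
    ∃ j, CompletelyJoinIrreducible j ∧ j ≤ sInf (e '' F) ∧ ¬ j ≤ sSup (e '' T) := by
  obtain ⟨G, hFG, hG⟩ := zorn_subset_nonempty {G | ¬ sInf (e '' G) ≤ sSup (e '' T)}
    (fun c hc hchain hne => ⟨⋃₀ c,
      h.not_sInf_image_sUnion_le hne hchain.directedOn hc,
      fun _ => Set.subset_sUnion_of_mem⟩) F hFT
  refine ⟨sInf (e '' G), h.completelyJoinIrreducible_of_forall_sInf_image_le hG.prop ?_,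
    sInf_le_sInf (Set.image_mono hFG), hG.prop⟩
  intro S hSG hST
  have hGS : ¬ sInf (e '' (G ∪ S)) ≤ sSup (e '' T) := by
    rwa [Set.image_union, sInf_union, inf_eq_right.2 hSG]
  rw [hG.eq_of_subset hGS Set.subset_union_left]
  exact sInf_le_sInf (Set.image_mono Set.subset_union_right)

lemma exists_completelyJoinIrreducible_le_not_le (h : IsCanonicalExtension e) {u v : C}
    (huv : ¬ u ≤ v) : ∃ j, CompletelyJoinIrreducible j ∧ j ≤ u ∧ ¬ j ≤ v := by
  obtain ⟨F, hFu, hFv⟩ := h.exists_sInf_image_le_not_le huv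
  obtain ⟨T, hvT, hFT⟩ := h.exists_le_sSup_image_not_le hFv
  obtain ⟨j, hj, hjF, hjT⟩ := h.exists_completelyJoinIrreducible_le_sInf_image hFT
  exact ⟨j, hj, hjF.trans hFu, fun hjv => hjT (hjv.trans hvT)⟩

end IsCanonicalExtension

/-- Canonical extensions are perfect lattices: the completely join-irreducible elements
join-generate and the completely meet-irreducible elements meet-generate. -/
theorem canonicalExtension_perfect {L C : Type*} [Lattice L] [BoundedOrder L]
    [CompleteLattice C] (e : L → C) (h : IsCanonicalExtension e) (u : C) :
    u = sSup {x : C | CompletelyJoinIrreducible x ∧ x ≤ u} ∧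
    u = sInf {y : C | CompletelyMeetIrreducible y ∧ u ≤ y} :=
  ⟨eq_sSup_of_forall_not_le (fun _ _ => h.exists_completelyJoinIrreducible_le_not_le) u,
    eq_sSup_of_forall_not_le (C := Cᵒᵈ)
      (fun _ _ => h.dual.exists_completelyJoinIrreducible_le_not_le) u⟩
end

section
/- Let L be a bounded lattice and T, U ⊆ L finite subsets. Then ⟨T⟩_ai ∩ ⟨U⟩_ai = ⟨{t ⊓ u : t ∈ T, u ∈ U}⟩_ai. In particular, the intersection of two finitely generated a-ideals of L is again a finitely generated a-ideal. -/
/-- A finite subset `M` of a bounded lattice is join-admissible if its join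
distributes over all meets with elements of the lattice. -/
def JoinAdmissible {L : Type*} [Lattice L] [BoundedOrder L] (M : Finset L) : Prop :=
  ∀ a : L, a ⊓ M.sup id = M.sup fun m => a ⊓ m

/-- An a-ideal: a downward-closed subset closed under admissible joins. -/
def IsAIdeal {L : Type*} [Lattice L] [BoundedOrder L] (A : Set L) : Prop :=
  (∀ a ∈ A, ∀ b, b ≤ a → b ∈ A) ∧
  ∀ M : Finset L, ↑M ⊆ A → JoinAdmissible M → M.sup id ∈ A

/-- The smallest a-ideal containing `T`. -/
def aIdealGen {L : Type*} [Lattice L] [BoundedOrder L] (T : Set L) : Set L :=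
  ⋂₀ {A : Set L | IsAIdeal A ∧ T ⊆ A}

section Aux
variable {L : Type*} [Lattice L] [BoundedOrder L]

lemma isAIdeal_gen (T : Set L) : IsAIdeal (aIdealGen T) := by
  constructor
  · intro a ha b hb A hA
    exact hA.1.1 a (ha A hA) b hb
  · intro M hM hadm A hA
    exact hA.1.2 M (fun x hx => hM hx A hA) hadm

lemma subset_gen (T : Set L) : T ⊆ aIdealGen T :=
  fun x hx A hA => hA.2 hx

lemma gen_subset {T A : Set L} (hA : IsAIdeal A) (h : T ⊆ A) : aIdealGen T ⊆ A :=
  fun x hx => hx A ⟨hA, h⟩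

lemma isAIdeal_inter {A B : Set L} (hA : IsAIdeal A) (hB : IsAIdeal B) :
    IsAIdeal (A ∩ B) := by
  refine ⟨fun a ha b hb => ⟨hA.1 a ha.1 b hb, hB.1 a ha.2 b hb⟩, fun M hM hadm => ?_⟩
  exact ⟨hA.2 M (fun x hx => (hM hx).1) hadm, hB.2 M (fun x hx => (hM hx).2) hadm⟩

/-- The key lemma: `{x | x ⊓ b ∈ C}` is an a-ideal whenever `C` is. -/
lemma isAIdeal_div {C : Set L} (hC : IsAIdeal C) (b : L) :
    IsAIdeal {x : L | x ⊓ b ∈ C} := by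
  classical
  constructor
  · intro a ha c hc
    exact hC.1 _ ha _ (inf_le_inf_right b hc)
  · intro M hM hadm
    have hsup : (M.image (· ⊓ b)).sup id = M.sup id ⊓ b := by
      rw [Finset.sup_image]
      have := hadm b
      simp only [inf_comm b] at this
      simpa [Function.comp, inf_comm] using this.symm
    have hadm' : JoinAdmissible (M.image (· ⊓ b)) := by
      intro a
      rw [hsup, Finset.sup_image, inf_comm (M.sup id) b, ← inf_assoc, hadm (a ⊓ b)]
      apply Finset.sup_congr rfl
      intro m _
      simp only [Function.comp]
      rw [inf_assoc, inf_comm b m]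
    have hmem : ↑(M.image (· ⊓ b)) ⊆ C := by
      intro x hx
      simp only [Finset.coe_image, Set.mem_image] at hx
      obtain ⟨m, hm, rfl⟩ := hx
      exact hM hm
    have := hC.2 _ hmem hadm'
    rw [hsup] at this
    exact this

end Aux

/-- The intersection of the a-ideals generated by finite sets `T` and `U` is the a-ideal
generated by the pairwise meets; in particular, the intersection of two finitely
generated a-ideals is again finitely generated. -/
theorem aIdealGen_inter (L : Type*) [Lattice L] [BoundedOrder L] :
    (∀ T U : Finset L,
      aIdealGen (T : Set L) ∩ aIdealGen (U : Set L) =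
        aIdealGen {c : L | ∃ t ∈ T, ∃ u ∈ U, c = t ⊓ u}) ∧
    ∀ A B : Set L, (∃ T : Finset L, A = aIdealGen (T : Set L)) →
      (∃ U : Finset L, B = aIdealGen (U : Set L)) →
      ∃ V : Finset L, A ∩ B = aIdealGen (V : Set L) := by
  classical
  have main : ∀ T U : Finset L,
      aIdealGen (T : Set L) ∩ aIdealGen (U : Set L) =
        aIdealGen {c : L | ∃ t ∈ T, ∃ u ∈ U, c = t ⊓ u} := by
    intro T U
    set P := aIdealGen {c : L | ∃ t ∈ T, ∃ u ∈ U, c = t ⊓ u} with hP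
    have hPid : IsAIdeal P := isAIdeal_gen _
    apply Set.Subset.antisymm
    · -- hard direction
      -- Step 1: every a ∈ ⟨U⟩ satisfies ∀ t ∈ T, t ⊓ a ∈ P
      have step1 : ∀ a ∈ aIdealGen (U : Set L), ∀ t ∈ T, t ⊓ a ∈ P := by
        intro a ha t ht
        have hsub : aIdealGen (U : Set L) ⊆ {x : L | x ⊓ t ∈ P} := by
          apply gen_subset (isAIdeal_div hPid t)
          intro u hu
          exact subset_gen _ ⟨t, ht, u, hu, by rw [inf_comm]⟩
        have := hsub ha
        simpa [inf_comm] using this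
      rintro a ⟨haT, haU⟩
      have hsub : aIdealGen (T : Set L) ⊆ {x : L | x ⊓ a ∈ P} := by
        apply gen_subset (isAIdeal_div hPid a)
        intro t ht
        exact step1 a haU t ht
      have := hsub haT
      simpa using this
    · apply gen_subset (isAIdeal_inter (isAIdeal_gen _) (isAIdeal_gen _))
      rintro c ⟨t, ht, u, hu, rfl⟩
      exact ⟨(isAIdeal_gen _).1 t (subset_gen _ ht) _ inf_le_left,
        (isAIdeal_gen _).1 u (subset_gen _ hu) _ inf_le_right⟩
  refine ⟨main, ?_⟩
  rintro A B ⟨T, rfl⟩ ⟨U, rfl⟩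
  refine ⟨(T ×ˢ U).image (fun p => p.1 ⊓ p.2), ?_⟩
  have hset : (((T ×ˢ U).image (fun p => p.1 ⊓ p.2) : Finset L) : Set L) =
      {c : L | ∃ t ∈ T, ∃ u ∈ U, c = t ⊓ u} := by
    ext c
    simp only [Finset.coe_image, Set.mem_image, Finset.mem_coe, Finset.mem_product,
      Set.mem_setOf_eq]
    constructor
    · rintro ⟨⟨t, u⟩, ⟨ht, hu⟩, rfl⟩; exact ⟨t, ht, u, hu, rfl⟩
    · rintro ⟨t, ht, u, hu, rfl⟩; exact ⟨⟨t, u⟩, ⟨ht, hu⟩, rfl⟩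
  rw [main T U, ← hset]
end

section
/- Let L be a bounded lattice, D a bounded distributive lattice, and f : L → D an injective function preserving finite meets and admissible joins. Then for all finite subsets T, U ⊆ L: if ⋁_{u∈U} f(u) ≤ ⋁_{t∈T} f(t) in D, then ⟨U⟩_ai ⊆ ⟨T⟩_ai. (Equivalently, the extension ⟨T⟩_ai ↦ ⋁_{t∈T} f(t) of f to finitely generated a-ideals is order-reflecting, hence injective.) -/
lemma aIdealGen_isAIdeal {L : Type*} [Lattice L] [BoundedOrder L] (T : Set L) :
    IsAIdeal (aIdealGen T) := by
  constructor
  · intro a ha b hb A hA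
    exact hA.1.1 a (ha A hA) b hb
  · intro M hM hadm A hA
    exact hA.1.2 M (fun m hm => hM hm A hA) hadm

lemma subset_aIdealGen {L : Type*} [Lattice L] [BoundedOrder L] (T : Set L) :
    T ⊆ aIdealGen T := fun t ht A hA => hA.2 ht

/-- If `f : L → D` is injective and preserves finite meets and admissible joins into a
bounded distributive lattice, then its extension to finitely generated a-ideals,
`⟨T⟩_ai ↦ ⋁_{t ∈ T} f t`, is order-reflecting. -/
theorem extension_orderReflecting {L D : Type*} [Lattice L] [BoundedOrder L]
    [DistribLattice D] [BoundedOrder D] (f : L → D) (hinj : Function.Injective f)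
    (htop : f ⊤ = ⊤) (hmeet : ∀ a b : L, f (a ⊓ b) = f a ⊓ f b)
    (hadm : ∀ M : Finset L, JoinAdmissible M → f (M.sup id) = M.sup f) :
    ∀ T U : Finset L, U.sup f ≤ T.sup f →
      aIdealGen (U : Set L) ⊆ aIdealGen (T : Set L) := by
  have hmono : ∀ a b : L, a ≤ b → f a ≤ f b := by
    intro a b hab
    have : f (a ⊓ b) = f a ⊓ f b := hmeet a b
    rw [inf_eq_left.mpr hab] at this
    exact inf_eq_left.mp this.symm
  have hrefl : ∀ a b : L, f a ≤ f b → a ≤ b := by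
    intro a b hab
    have : f (a ⊓ b) = f a := by rw [hmeet, inf_eq_left.mpr hab]
    exact inf_eq_left.mp (hinj this)
  intro T U hUT
  classical
  -- It suffices to show U ⊆ aIdealGen T
  suffices hU : (U : Set L) ⊆ aIdealGen (T : Set L) by
    intro a ha
    exact ha (aIdealGen (T : Set L)) ⟨aIdealGen_isAIdeal _, hU⟩
  intro u hu
  have hfu : f u ≤ T.sup f := le_trans (Finset.le_sup hu) hUT
  set M : Finset L := T.image (fun t => u ⊓ t) with hM
  -- the sup of f over images
  have key : ∀ a : L, a ⊓ u ≤ T.sup (fun t => a ⊓ (u ⊓ t)) := by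
    intro a
    apply hrefl
    have h1 : f (a ⊓ u) = f a ⊓ f u ⊓ T.sup f := by
      rw [hmeet, inf_assoc, inf_eq_left.mpr hfu]
    rw [h1, Finset.sup_inf_distrib_left]
    apply Finset.sup_le
    intro t ht
    calc f a ⊓ f u ⊓ f t = f (a ⊓ (u ⊓ t)) := by rw [hmeet, hmeet, inf_assoc]
      _ ≤ f (T.sup fun t => a ⊓ (u ⊓ t)) := hmono _ _ (Finset.le_sup (f := fun t => a ⊓ (u ⊓ t)) ht)
  have hMsup : M.sup id = u := by
    apply le_antisymm
    · exact Finset.sup_le (by rintro m hm; rw [hM, Finset.mem_image] at hm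
                              obtain ⟨t, _, rfl⟩ := hm; exact inf_le_left)
    · have := key u
      rw [inf_idem] at this
      refine this.trans ?_
      rw [hM, Finset.sup_image]
      apply Finset.sup_le
      intro t ht
      exact le_trans inf_le_right (Finset.le_sup (f := fun t => u ⊓ t) ht)
  have hMadm : JoinAdmissible M := by
    intro a
    rw [hMsup, hM, Finset.sup_image]
    apply le_antisymm
    · exact (key a).trans (le_of_eq rfl)
    · apply Finset.sup_le
      intro t ht
      exact inf_le_inf_left a inf_le_left
  have hMsub : (M : Set L) ⊆ aIdealGen (T : Set L) := by
    intro m hm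
    rw [hM, Finset.coe_image] at hm
    obtain ⟨t, ht, rfl⟩ := hm
    exact (aIdealGen_isAIdeal _).1 t (subset_aIdealGen _ ht) _ inf_le_right
  have := (aIdealGen_isAIdeal (T : Set L)).2 M hMsub hMadm
  rwa [hMsup] at this
end
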